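/- arXiv:2507.16415 — 3 statements merged into one kernel-verified Lean document; each statement's English description precedes it below -/
import Mathlib

section
/- Let a, b, f, g > 0 and c, d ∈ ℝ, and suppose a·b² < (3√3/4)·(f²/g). Then the function P : ℝ² → ℝ defined by P(x₁,x₂) := ½(x₁² + x₂²) + (g/f²)·(a·tanh(b·(x₂ − c)) + d) is strictly convex on ℝ². -/
/-!
With `κ = g/f²`, `P` splits as `x₁²/2 + (x₂²/2 + κa·tanh(b(x₂ − c))) + κd`, a sum of functions of
the separate coordinates, so it suffices that each summand is strictly convex on `ℝ`. The second
derivative of the `x₂`-summand is `1 - 2κab²·t(1 - t²)` with `t = tanh(b(x₂ - c)) ∈ (-1, 1)`, and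
`|t(1 - t²)| ≤ 2/(3√3)` on `[-1, 1]` (attained at `t = ±1/√3`), so it is at least
`1 - κab²·4/(3√3) > 0`.
-/

open Real Set

theorem Real.hasDerivAt_tanh (x : ℝ) : HasDerivAt tanh (1 - tanh x ^ 2) x := by
  have hcosh := (cosh_pos x).ne'
  have h : HasDerivAt (fun y => sinh y / cosh y) _ x :=
    (hasDerivAt_sinh x).div (hasDerivAt_cosh x) hcosh
  rw [show tanh = fun y => sinh y / cosh y from funext tanh_eq_sinh_div_cosh]
  refine h.congr_deriv ?_
  field_simp

-- With `s = √3 t`, `2 - 3√3 t(1 - t²) = (s - 1)²(s + 2)`, and `s + 2 > 0` for `t ≥ -1`.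
lemma mul_one_sub_sq_le {t : ℝ} (ht : -1 ≤ t) : t * (1 - t ^ 2) ≤ 2 / (3 * √3) := by
  have h3 : √3 ^ 2 = 3 := sq_sqrt (by norm_num)
  have h2 : √3 < 2 := by nlinarith [sqrt_nonneg 3]
  have hs : 0 ≤ √3 * t + 2 := by nlinarith [mul_nonneg (neg_le_iff_add_nonneg.mp ht) (sqrt_nonneg 3)]
  rw [le_div_iff₀ (by positivity)]
  nlinarith [mul_nonneg (sq_nonneg (√3 * t - 1)) hs]

lemma abs_mul_one_sub_sq_le {t : ℝ} (ht : |t| ≤ 1) : |t * (1 - t ^ 2)| ≤ 2 / (3 * √3) := by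
  obtain ⟨hlo, hhi⟩ := abs_le.mp ht
  refine abs_le.mpr ⟨?_, mul_one_sub_sq_le hlo⟩
  have := mul_one_sub_sq_le (t := -t) (by linarith)
  linarith [show -t * (1 - (-t) ^ 2) = -(t * (1 - t ^ 2)) by ring]

theorem strictConvexOn_half_sq_add_mul_tanh (A β c : ℝ) (h : |A| * β ^ 2 < 3 * √3 / 4) :
    StrictConvexOn ℝ univ (fun s => s ^ 2 / 2 + A * tanh (β * (s - c))) := by
  set F' : ℝ → ℝ := fun s => s + A * β * (1 - tanh (β * (s - c)) ^ 2)
  have hlin (s : ℝ) : HasDerivAt (fun s => β * (s - c)) β s := by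
    simpa using ((hasDerivAt_id s).sub_const c).const_mul β
  have hF (s : ℝ) : HasDerivAt (fun s => s ^ 2 / 2 + A * tanh (β * (s - c))) (F' s) s := by
    refine (((hasDerivAt_pow 2 s).div_const 2).add
      (((hasDerivAt_tanh _).comp s (hlin s)).const_mul A)).congr_deriv ?_
    simp only [F']
    ring
  have hF' (s : ℝ) : HasDerivAt F'
      (1 - 2 * (A * β ^ 2) * (tanh (β * (s - c)) * (1 - tanh (β * (s - c)) ^ 2))) s := by
    refine ((hasDerivAt_id s).add ((((hasDerivAt_tanh _).comp s (hlin s)).pow 2).const_sub 1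
      |>.const_mul (A * β))).congr_deriv ?_
    simp only [Function.comp_apply]
    ring
  refine strictConvexOn_univ_of_deriv2_pos
    (continuous_iff_continuousAt.mpr fun s => (hF s).continuousAt) fun s => ?_
  rw [Function.iterate_succ_apply, Function.iterate_one, funext fun s => (hF s).deriv,
    (hF' s).deriv]
  have hT := abs_mul_one_sub_sq_le (abs_tanh_lt_one (β * (s - c))).le
  set T := tanh (β * (s - c)) * (1 - tanh (β * (s - c)) ^ 2)
  have hsmall : |2 * (A * β ^ 2) * T| < 1 := by
    rw [abs_mul, abs_mul, abs_mul, abs_two, abs_of_nonneg (sq_nonneg β)]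
    calc 2 * (|A| * β ^ 2) * |T| ≤ 2 * (|A| * β ^ 2) * (2 / (3 * √3)) := by gcongr
      _ < 2 * (3 * √3 / 4) * (2 / (3 * √3)) := by gcongr
      _ = 1 := by field_simp; ring
  linarith [le_abs_self (2 * (A * β ^ 2) * T)]

theorem strictConvexOn_univ_sum_apply {ι : Type*} [Fintype ι] {u : ι → ℝ → ℝ}
    (hu : ∀ i, StrictConvexOn ℝ univ (u i)) :
    StrictConvexOn ℝ univ (fun x : EuclideanSpace ℝ ι => ∑ i, u i (x i)) := by
  refine ⟨convex_univ, fun x _ y _ hxy p q hp hq hpq => ?_⟩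
  obtain ⟨j, hj⟩ : ∃ j, x j ≠ y j := by
    by_contra! h
    exact hxy (PiLp.ext h)
  simp only [PiLp.add_apply, PiLp.smul_apply, smul_eq_mul, Finset.mul_sum, ← Finset.sum_add_distrib]
  refine Finset.sum_lt_sum (fun i _ => (hu i).convexOn.2 trivial trivial hp.le hq.le hpq)
    ⟨j, Finset.mem_univ j, (hu j).2 trivial trivial hj hp hq hpq⟩

theorem stmt_6_general (a b c d f g : ℝ) (ha : 0 < a) (hf : 0 < f) (hg : 0 < g)
    (h : a * b ^ 2 < 3 * Real.sqrt 3 / 4 * (f ^ 2 / g)) :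
    StrictConvexOn ℝ (Set.univ : Set (EuclideanSpace ℝ (Fin 2)))
      (fun x : EuclideanSpace ℝ (Fin 2) =>
        (x 0 ^ 2 + x 1 ^ 2) / 2 + g / f ^ 2 * (a * Real.tanh (b * (x 1 - c)) + d)) := by
  have hκ : |g / f ^ 2 * a| * b ^ 2 < 3 * √3 / 4 := by
    calc |g / f ^ 2 * a| * b ^ 2 = g / f ^ 2 * (a * b ^ 2) := by
          rw [abs_of_pos (by positivity)]; ring
      _ < g / f ^ 2 * (3 * √3 / 4 * (f ^ 2 / g)) := by gcongr
      _ = 3 * √3 / 4 := by field_simp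
  have hu : ∀ i, StrictConvexOn ℝ univ
      (![fun s => s ^ 2 / 2, fun s => s ^ 2 / 2 + g / f ^ 2 * a * tanh (b * (s - c))] i) := by
    rw [Fin.forall_fin_two]
    exact ⟨by simpa using strictConvexOn_half_sq_add_mul_tanh 0 0 0 (by simp),
      strictConvexOn_half_sq_add_mul_tanh _ b c hκ⟩
  refine ((strictConvexOn_univ_sum_apply hu).add_const (g / f ^ 2 * d)).congr fun x _ => ?_
  simp only [Fin.sum_univ_two, Matrix.cons_val_zero, Matrix.cons_val_one, Pi.add_apply]
  ring

/-- Let `a, b, f, g > 0` and `c, d ∈ ℝ`, and suppose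
`a·b² < (3√3/4)·(f²/g)`.  Then the function `P : ℝ² → ℝ` defined by
`P(x₁,x₂) := ½(x₁² + x₂²) + (g/f²)·(a·tanh(b·(x₂ − c)) + d)` is strictly convex on ℝ². -/
theorem stmt_6 (a b c d f g : ℝ) (ha : 0 < a) (hb : 0 < b) (hf : 0 < f) (hg : 0 < g)
    (h : a * b ^ 2 < 3 * Real.sqrt 3 / 4 * (f ^ 2 / g)) :
    StrictConvexOn ℝ (Set.univ : Set (EuclideanSpace ℝ (Fin 2)))
      (fun x : EuclideanSpace ℝ (Fin 2) =>
        (x 0 ^ 2 + x 1 ^ 2) / 2 + g / f ^ 2 * (a * Real.tanh (b * (x 1 - c)) + d)) :=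
  stmt_6_general a b c d f g ha hf hg h
end

section
/- Let ε > 0 and let (φ_ε, ψ_ε) be a maximizer of the entropic dual functional D_{σ,ε}. Then: (a) for σ-almost every y, ψ_ε(y) = −ε·log ∫_Ω exp((φ_ε(x) − ½‖x−y‖²)/ε) dμ(x); (b) for μ-almost every x, φ_ε(x) < 0 and −(f²/g)·φ_ε(x) = exp(φ_ε(x)/ε)·∫ exp((ψ_ε(y) − ½‖x−y‖²)/ε) dσ(y); and consequently (c) the measure γ_ε on Ω×ℝ² with density exp((φ_ε(x)+ψ_ε(y)−½‖x−y‖²)/ε) with respect to μ⊗σ has second marginal σ and first marginal h_ε·μ, where h_ε := −(f²/g)·φ_ε. -/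
open MeasureTheory

/-- The (topological) support of a Borel measure: the set of points all of whose
neighbourhoods have positive measure. -/
def msupport (σ : Measure (EuclideanSpace ℝ (Fin 2))) : Set (EuclideanSpace ℝ (Fin 2)) :=
  { y | ∀ U ∈ nhds y, 0 < σ U }

/-- Admissible pairs for the entropic dual problem: `φ` continuous on `Ω` and `ψ`
continuous on the support of `σ`. -/
def EntAdmissible (Ω : Set (EuclideanSpace ℝ (Fin 2)))
    (σ : Measure (EuclideanSpace ℝ (Fin 2)))
    (φ ψ : EuclideanSpace ℝ (Fin 2) → ℝ) : Prop :=
  ContinuousOn φ Ω ∧ ContinuousOn ψ (msupport σ)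

/-- The entropic dual functional
`D_{σ,ε}(φ,ψ) := ∫ ψ dσ − (f²/(2g)) ∫ φ² dμ
  − ε ∫∫ (exp((φ(x)+ψ(y)−½‖x−y‖²)/ε) − 1) dμ(x) dσ(y)`. -/
noncomputable def Dse (μ σ : Measure (EuclideanSpace ℝ (Fin 2))) (f g ε : ℝ)
    (φ ψ : EuclideanSpace ℝ (Fin 2) → ℝ) : ℝ :=
  (∫ y, ψ y ∂σ) - f ^ 2 / (2 * g) * (∫ x, φ x ^ 2 ∂μ)
    - ε * ∫ p, (Real.exp ((φ p.1 + ψ p.2 - ‖p.1 - p.2‖ ^ 2 / 2) / ε) - 1) ∂(μ.prod σ)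

/-! Perturb the maximizer by `t η` in either variable and differentiate the dual functional at
`t = 0`. This gives the weak Euler–Lagrange equations: for every smooth compactly supported `η`,
`∫ η dσ = ∫ η(y) dγ` and `-(f²/g) ∫ φ η dμ = ∫ η(x) dγ`, where `γ` has the entropic density
w.r.t. `μ ⊗ σ`. By Fubini and the fundamental lemma of the calculus of variations, the density
integrates to `1` in `x` (σ-a.e.) and to `-(f²/g) φ` in `y` (μ-a.e.). These are the two marginal
identities; factoring `exp (ψ / ε)`, resp. `exp (φ / ε)`, out of the density gives (a) and (b). -/

open Real
open scoped ContDiff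

section Calculus

variable {α : Type*} [MeasurableSpace α] {ν : Measure α}

theorem hasDerivAt_integral_mul_exp_mul_sub_one [IsFiniteMeasure ν] {E w : α → ℝ} {C : ℝ}
    (hE : Integrable E ν) (hw : AEStronglyMeasurable w ν) (hwC : ∀ᵐ p ∂ν, ‖w p‖ ≤ C) :
    HasDerivAt (fun t => ∫ p, (E p * exp (t * w p) - 1) ∂ν) (∫ p, E p * w p ∂ν) 0 := by
  have hderiv : ∀ p t, HasDerivAt (fun t => E p * exp (t * w p) - 1)
      (E p * exp (t * w p) * w p) t := fun p t => by
    simpa [mul_assoc] using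
      ((((hasDerivAt_id t).mul_const (w p)).exp).const_mul (E p)).sub_const 1
  have hbound : ∀ᵐ p ∂ν, ∀ t ∈ Metric.ball (0 : ℝ) 1,
      ‖E p * exp (t * w p) * w p‖ ≤ ‖E p‖ * (exp C * C) := by
    filter_upwards [hwC] with p hp t ht
    have ht1 : ‖t‖ ≤ 1 := (mem_ball_zero_iff.1 ht).le
    have htw : t * w p ≤ C := calc
      t * w p ≤ ‖t‖ * ‖w p‖ := (le_abs_self _).trans (abs_mul t (w p)).le
      _ ≤ 1 * C := by gcongr
      _ = C := one_mul C
    rw [norm_mul, norm_mul, Real.norm_of_nonneg (exp_pos _).le, mul_assoc]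
    gcongr
  have := hasDerivAt_integral_of_dominated_loc_of_deriv_le (x₀ := 0)
    (Metric.ball_mem_nhds 0 one_pos)
    (Filter.Eventually.of_forall fun t =>
      (hE.aestronglyMeasurable.mul
        (continuous_exp.comp_aestronglyMeasurable (hw.const_mul t))).sub
          aestronglyMeasurable_const)
    ((hE.sub (integrable_const 1)).congr (ae_of_all _ fun p => by simp))
    ((hE.aestronglyMeasurable.mul
      (continuous_exp.comp_aestronglyMeasurable (hw.const_mul 0))).mul hw) hbound
    (hE.norm.mul_const _) (Filter.Eventually.of_forall fun p t _ => hderiv p t)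
  simpa using this.2

theorem hasDerivAt_integral_add_mul_sq {u v : α → ℝ} (hu : MemLp u 2 ν) (hv : MemLp v 2 ν) :
    HasDerivAt (fun t => ∫ p, (u p + t * v p) ^ 2 ∂ν) (2 * ∫ p, u p * v p ∂ν) 0 := by
  have huv : Integrable (fun p => u p * v p) ν := hu.integrable_mul hv
  have hexpand : (fun t => ∫ p, (u p + t * v p) ^ 2 ∂ν) = fun t =>
      (∫ p, u p ^ 2 ∂ν) + t * (2 * ∫ p, u p * v p ∂ν) + t ^ 2 * ∫ p, v p ^ 2 ∂ν := by
    funext t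
    calc ∫ p, (u p + t * v p) ^ 2 ∂ν
        = ∫ p, (u p ^ 2 + t * (2 * (u p * v p)) + t ^ 2 * v p ^ 2) ∂ν := by
          congr 1; funext p; ring
      _ = _ := by
          rw [integral_add, integral_add, integral_const_mul, integral_const_mul,
            integral_const_mul]
          exacts [hu.integrable_sq, (huv.const_mul 2).const_mul t,
            hu.integrable_sq.add ((huv.const_mul 2).const_mul t),
            hv.integrable_sq.const_mul _]
  rw [hexpand]
  simpa using (((hasDerivAt_id' (0 : ℝ)).mul_const _).const_add _).fun_add
    ((hasDerivAt_pow 2 (0 : ℝ)).mul_const (∫ p, v p ^ 2 ∂ν))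

end Calculus

section Marginals

variable {α β : Type*} [MeasurableSpace α] [MeasurableSpace β] {μ : Measure α} {ν : Measure β}
  [SFinite μ] [SFinite ν] {ρ : α × β → ℝ}

theorem map_snd_withDensity_ofReal_prod (hρ : Integrable ρ (μ.prod ν)) (hρ0 : 0 ≤ ρ) :
    ((μ.prod ν).withDensity fun p => ENNReal.ofReal (ρ p)).map Prod.snd =
      ν.withDensity fun y => ENNReal.ofReal (∫ x, ρ (x, y) ∂μ) := by
  ext s hs
  have hρ' : AEMeasurable (fun p => ENNReal.ofReal (ρ p)) (μ.prod (ν.restrict s)) := by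
    simpa [← Measure.prod_restrict] using
      hρ.aemeasurable.ennreal_ofReal.restrict (s := .univ ×ˢ s)
  rw [Measure.map_apply measurable_snd hs, withDensity_apply _ (measurable_snd hs),
    withDensity_apply _ hs, ← Set.univ_prod, ← Measure.prod_restrict, Measure.restrict_univ,
    lintegral_prod_symm _ hρ']
  refine lintegral_congr_ae (ae_restrict_of_ae (hρ.prod_left_ae.mono fun y hy => ?_))
  exact (ofReal_integral_eq_lintegral_ofReal hy (ae_of_all _ fun x => hρ0 _)).symm

theorem map_fst_withDensity_ofReal_prod (hρ : Integrable ρ (μ.prod ν)) (hρ0 : 0 ≤ ρ) :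
    ((μ.prod ν).withDensity fun p => ENNReal.ofReal (ρ p)).map Prod.fst =
      μ.withDensity fun x => ENNReal.ofReal (∫ y, ρ (x, y) ∂ν) := by
  ext s hs
  have hρ' : AEMeasurable (fun p => ENNReal.ofReal (ρ p)) ((μ.restrict s).prod ν) := by
    simpa [← Measure.prod_restrict] using
      hρ.aemeasurable.ennreal_ofReal.restrict (s := s ×ˢ .univ)
  rw [Measure.map_apply measurable_fst hs, withDensity_apply _ (measurable_fst hs),
    withDensity_apply _ hs, ← Set.prod_univ, ← Measure.prod_restrict, Measure.restrict_univ,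
    lintegral_prod _ hρ']
  refine lintegral_congr_ae (ae_restrict_of_ae (hρ.prod_right_ae.mono fun x hx => ?_))
  exact (ofReal_integral_eq_lintegral_ofReal hx (ae_of_all _ fun y => hρ0 _)).symm

end Marginals

local notation "ℝ²" => EuclideanSpace ℝ (Fin 2)

noncomputable def entropicDensity (ε : ℝ) (φ ψ : ℝ² → ℝ) (p : ℝ² × ℝ²) : ℝ :=
  exp ((φ p.1 + ψ p.2 - ‖p.1 - p.2‖ ^ 2 / 2) / ε)

theorem entropicDensity_mk_eq_exp_fst_mul (ε : ℝ) (φ ψ : ℝ² → ℝ) (x y : ℝ²) :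
    entropicDensity ε φ ψ (x, y) = exp (φ x / ε) * exp ((ψ y - ‖x - y‖ ^ 2 / 2) / ε) := by
  rw [entropicDensity, ← exp_add]
  congr 1
  ring

theorem entropicDensity_mk_eq_exp_snd_mul (ε : ℝ) (φ ψ : ℝ² → ℝ) (x y : ℝ²) :
    entropicDensity ε φ ψ (x, y) = exp (ψ y / ε) * exp ((φ x - ‖x - y‖ ^ 2 / 2) / ε) := by
  rw [entropicDensity, ← exp_add]
  congr 1
  ring

section Variation

variable {μ σ : Measure ℝ²} [IsFiniteMeasure μ] [IsFiniteMeasure σ] {f g ε A B C : ℝ}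
  {φ ψ η : ℝ² → ℝ}

theorem integrable_entropicDensity (hε : 0 < ε) (hφ : AEStronglyMeasurable φ μ)
    (hψ : AEStronglyMeasurable ψ σ) (hφA : ∀ᵐ x ∂μ, φ x ≤ A) (hψB : ∀ᵐ y ∂σ, ψ y ≤ B) :
    Integrable (entropicDensity ε φ ψ) (μ.prod σ) := by
  have hφ₁ : AEStronglyMeasurable (fun p : ℝ² × ℝ² => φ p.1) (μ.prod σ) :=
    hφ.comp_quasiMeasurePreserving Measure.quasiMeasurePreserving_fst
  have hψ₂ : AEStronglyMeasurable (fun p : ℝ² × ℝ² => ψ p.2) (μ.prod σ) :=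
    hψ.comp_quasiMeasurePreserving Measure.quasiMeasurePreserving_snd
  have hcost : AEMeasurable (fun p : ℝ² × ℝ² => ‖p.1 - p.2‖ ^ 2 / 2) (μ.prod σ) := by
    fun_prop
  refine .of_bound (measurable_exp.comp_aemeasurable
    (((hφ₁.aemeasurable.add hψ₂.aemeasurable).sub hcost).div_const ε)).aestronglyMeasurable
    (exp ((A + B) / ε)) ?_
  filter_upwards [Measure.quasiMeasurePreserving_fst.ae hφA,
    Measure.quasiMeasurePreserving_snd.ae hψB] with p hφp hψp
  rw [entropicDensity, Real.norm_of_nonneg (exp_pos _).le]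
  gcongr
  linarith [sq_nonneg ‖p.1 - p.2‖]

theorem hasDerivAt_Dse_add_mul_left (hε : ε ≠ 0)
    (hE : Integrable (entropicDensity ε φ ψ) (μ.prod σ)) (hφ : MemLp φ 2 μ)
    (hη : AEStronglyMeasurable η μ) (hηC : ∀ᵐ x ∂μ, ‖η x‖ ≤ C) :
    HasDerivAt (fun t => Dse μ σ f g ε (fun x => φ x + t * η x) ψ)
      (-(f ^ 2 / g) * ∫ x, φ x * η x ∂μ
        - ∫ p, entropicDensity ε φ ψ p * η p.1 ∂(μ.prod σ)) 0 := by
  have hsq := hasDerivAt_integral_add_mul_sq hφ (MemLp.of_bound hη C hηC)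
  have hexp := hasDerivAt_integral_mul_exp_mul_sub_one hE (w := fun p => η p.1 / ε)
    ((hη.aemeasurable.comp_quasiMeasurePreserving
      Measure.quasiMeasurePreserving_fst).div_const ε).aestronglyMeasurable
    (C := C / ‖ε‖) ((Measure.quasiMeasurePreserving_fst.ae hηC).mono fun p hp => by
      rw [norm_div]; gcongr)
  have hDse : (fun t => Dse μ σ f g ε (fun x => φ x + t * η x) ψ) = fun t =>
      (∫ y, ψ y ∂σ) - f ^ 2 / (2 * g) * (∫ x, (φ x + t * η x) ^ 2 ∂μ)
        - ε * ∫ p, (entropicDensity ε φ ψ p * exp (t * (η p.1 / ε)) - 1) ∂(μ.prod σ) := by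
    funext t
    simp only [Dse, entropicDensity, ← exp_add]
    congr 4
    funext p
    congr 2
    ring
  rw [hDse]
  refine (((hsq.const_mul (f ^ 2 / (2 * g))).const_sub _).fun_sub
    (hexp.const_mul ε)).congr_deriv ?_
  simp only [mul_div_assoc', integral_div]
  field_simp

theorem hasDerivAt_Dse_add_mul_right (hε : ε ≠ 0)
    (hE : Integrable (entropicDensity ε φ ψ) (μ.prod σ)) (hψ : Integrable ψ σ)
    (hη : AEStronglyMeasurable η σ) (hηC : ∀ᵐ y ∂σ, ‖η y‖ ≤ C) :
    HasDerivAt (fun t => Dse μ σ f g ε φ (fun y => ψ y + t * η y))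
      ((∫ y, η y ∂σ) - ∫ p, entropicDensity ε φ ψ p * η p.2 ∂(μ.prod σ)) 0 := by
  have hηint : Integrable η σ := .of_bound hη C hηC
  have hexp := hasDerivAt_integral_mul_exp_mul_sub_one hE (w := fun p => η p.2 / ε)
    ((hη.aemeasurable.comp_quasiMeasurePreserving
      Measure.quasiMeasurePreserving_snd).div_const ε).aestronglyMeasurable
    (C := C / ‖ε‖) ((Measure.quasiMeasurePreserving_snd.ae hηC).mono fun p hp => by
      rw [norm_div]; gcongr)
  have hDse : (fun t => Dse μ σ f g ε φ (fun y => ψ y + t * η y)) = fun t =>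
      (∫ y, ψ y ∂σ) + t * (∫ y, η y ∂σ) - f ^ 2 / (2 * g) * (∫ x, φ x ^ 2 ∂μ)
        - ε * ∫ p, (entropicDensity ε φ ψ p * exp (t * (η p.2 / ε)) - 1) ∂(μ.prod σ) := by
    funext t
    simp only [Dse, entropicDensity, ← exp_add, integral_add hψ (hηint.const_mul t),
      integral_const_mul]
    congr 3
    funext p
    congr 2
    ring
  rw [hDse]
  refine (((((hasDerivAt_id' (0 : ℝ)).mul_const (∫ y, η y ∂σ)).const_add _).sub_const _).fun_sub
    (hexp.const_mul ε)).congr_deriv ?_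
  simp only [mul_div_assoc', integral_div]
  field_simp

theorem neg_mul_integral_eq_integral_entropicDensity_mul_fst (hε : ε ≠ 0)
    (hE : Integrable (entropicDensity ε φ ψ) (μ.prod σ)) (hφ : MemLp φ 2 μ)
    (hη : AEStronglyMeasurable η μ) (hηC : ∀ᵐ x ∂μ, ‖η x‖ ≤ C)
    (hmax : ∀ t, Dse μ σ f g ε (fun x => φ x + t * η x) ψ ≤ Dse μ σ f g ε φ ψ) :
    -(f ^ 2 / g) * ∫ x, φ x * η x ∂μ = ∫ p, entropicDensity ε φ ψ p * η p.1 ∂(μ.prod σ) :=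
  sub_eq_zero.1 <| IsLocalMax.hasDerivAt_eq_zero (.of_forall fun t => by simpa using hmax t)
    (hasDerivAt_Dse_add_mul_left hε hE hφ hη hηC)

theorem integral_eq_integral_entropicDensity_mul_snd (hε : ε ≠ 0)
    (hE : Integrable (entropicDensity ε φ ψ) (μ.prod σ)) (hψ : Integrable ψ σ)
    (hη : AEStronglyMeasurable η σ) (hηC : ∀ᵐ y ∂σ, ‖η y‖ ≤ C)
    (hmax : ∀ t, Dse μ σ f g ε φ (fun y => ψ y + t * η y) ≤ Dse μ σ f g ε φ ψ) :
    ∫ y, η y ∂σ = ∫ p, entropicDensity ε φ ψ p * η p.2 ∂(μ.prod σ) :=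
  sub_eq_zero.1 <| IsLocalMax.hasDerivAt_eq_zero (.of_forall fun t => by simpa using hmax t)
    (hasDerivAt_Dse_add_mul_right hε hE hψ hη hηC)

theorem ae_integral_entropicDensity_mk_eq_neg_mul (hε : ε ≠ 0)
    (hE : Integrable (entropicDensity ε φ ψ) (μ.prod σ)) (hφ : MemLp φ 2 μ)
    (hmax : ∀ η : ℝ² → ℝ, ContDiff ℝ ∞ η → HasCompactSupport η →
      ∀ t, Dse μ σ f g ε (fun x => φ x + t * η x) ψ ≤ Dse μ σ f g ε φ ψ) :
    ∀ᵐ x ∂μ, ∫ y, entropicDensity ε φ ψ (x, y) ∂σ = -(f ^ 2 / g) * φ x := by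
  refine ae_eq_of_integral_contDiff_smul_eq hE.integral_prod_left.locallyIntegrable
    ((hφ.integrable one_le_two).const_mul _).locallyIntegrable fun η hη hηc => ?_
  obtain ⟨C, hC⟩ := hη.continuous.bounded_above_of_compact_support hηc
  have hvar := neg_mul_integral_eq_integral_entropicDensity_mul_fst hε hE hφ
    hη.continuous.aestronglyMeasurable (.of_forall hC) (hmax η hη hηc)
  have hint : Integrable (fun p => entropicDensity ε φ ψ p * η p.1) (μ.prod σ) :=
    hE.mul_bdd (hη.continuous.comp continuous_fst).aestronglyMeasurable
      (.of_forall fun p => hC p.1)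
  rw [integral_prod _ hint] at hvar
  simp only [integral_mul_const, smul_eq_mul] at hvar ⊢
  calc ∫ x, η x * ∫ y, entropicDensity ε φ ψ (x, y) ∂σ ∂μ
      = ∫ x, (∫ y, entropicDensity ε φ ψ (x, y) ∂σ) * η x ∂μ := by simp only [mul_comm]
    _ = ∫ x, η x * (-(f ^ 2 / g) * φ x) ∂μ := by
      rw [← hvar, ← integral_const_mul]
      congr 1
      funext x
      ring

theorem ae_integral_entropicDensity_mk_eq_one (hε : ε ≠ 0)
    (hE : Integrable (entropicDensity ε φ ψ) (μ.prod σ)) (hψ : Integrable ψ σ)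
    (hmax : ∀ η : ℝ² → ℝ, ContDiff ℝ ∞ η → HasCompactSupport η →
      ∀ t, Dse μ σ f g ε φ (fun y => ψ y + t * η y) ≤ Dse μ σ f g ε φ ψ) :
    ∀ᵐ y ∂σ, ∫ x, entropicDensity ε φ ψ (x, y) ∂μ = 1 := by
  refine ae_eq_of_integral_contDiff_smul_eq hE.integral_prod_right.locallyIntegrable
    (locallyIntegrable_const 1) fun η hη hηc => ?_
  obtain ⟨C, hC⟩ := hη.continuous.bounded_above_of_compact_support hηc
  have hvar := integral_eq_integral_entropicDensity_mul_snd hε hE hψ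
    hη.continuous.aestronglyMeasurable (.of_forall hC) (hmax η hη hηc)
  have hint : Integrable (fun p => entropicDensity ε φ ψ p * η p.2) (μ.prod σ) :=
    hE.mul_bdd (hη.continuous.comp continuous_snd).aestronglyMeasurable
      (.of_forall fun p => hC p.2)
  rw [integral_prod_symm _ hint] at hvar
  simp only [integral_mul_const, smul_eq_mul, mul_one] at hvar ⊢
  rw [hvar]
  congr 1
  funext y
  ring

end Variation

section Optimality

variable {μ σ : Measure ℝ²} {f g ε : ℝ} {φ ψ : ℝ² → ℝ}

theorem eq_neg_mul_log_of_integral_entropicDensity_mk_eq_one (hε : ε ≠ 0) {y : ℝ²}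
    (h : ∫ x, entropicDensity ε φ ψ (x, y) ∂μ = 1) :
    ψ y = -ε * log (∫ x, exp ((φ x - ‖x - y‖ ^ 2 / 2) / ε) ∂μ) := by
  simp only [entropicDensity_mk_eq_exp_snd_mul, integral_const_mul] at h
  rw [eq_inv_of_mul_eq_one_right h, ← exp_neg, log_exp]
  field_simp

theorem neg_and_eq_of_integral_entropicDensity_mk_eq [NeZero σ] (hg : 0 < g) {x : ℝ²}
    (hint : Integrable (fun y => entropicDensity ε φ ψ (x, y)) σ)
    (h : ∫ y, entropicDensity ε φ ψ (x, y) ∂σ = -(f ^ 2 / g) * φ x) :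
    φ x < 0 ∧
      -(f ^ 2 / g) * φ x = exp (φ x / ε) * ∫ y, exp ((ψ y - ‖x - y‖ ^ 2 / 2) / ε) ∂σ := by
  have hpos : 0 < ∫ y, entropicDensity ε φ ψ (x, y) ∂σ := integral_exp_pos hint
  refine ⟨neg_of_mul_neg_right (a := f ^ 2 / g) (by linarith) (by positivity), ?_⟩
  rw [← h]
  simp only [entropicDensity_mk_eq_exp_fst_mul, integral_const_mul]

end Optimality

theorem msupport_eq_support (σ : Measure ℝ²) : msupport σ = σ.support :=
  Set.ext fun y => (Measure.mem_support_iff_forall y).symm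

theorem stmt_8_general
    (Ω : Set (EuclideanSpace ℝ (Fin 2)))
    (hΩcpt : IsCompact Ω)
    (μ : Measure (EuclideanSpace ℝ (Fin 2)))
    (hμ : μ = (volume Ω)⁻¹ • volume.restrict Ω)
    (f g : ℝ) (hg : 0 < g)
    (σ : Measure (EuclideanSpace ℝ (Fin 2))) [IsProbabilityMeasure σ]
    (hσ : ∃ K, IsCompact K ∧ σ Kᶜ = 0)
    (ε : ℝ) (hε : 0 < ε)
    (φε ψε : EuclideanSpace ℝ (Fin 2) → ℝ)
    (hadm : EntAdmissible Ω σ φε ψε)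
    (hmax : ∀ φ ψ, EntAdmissible Ω σ φ ψ → Dse μ σ f g ε φ ψ ≤ Dse μ σ f g ε φε ψε) :
    (∀ᵐ y ∂σ, ψε y =
        -ε * Real.log (∫ x, Real.exp ((φε x - ‖x - y‖ ^ 2 / 2) / ε) ∂μ)) ∧
    (∀ᵐ x ∂μ, φε x < 0 ∧
        -(f ^ 2 / g) * φε x =
          Real.exp (φε x / ε) * ∫ y, Real.exp ((ψε y - ‖x - y‖ ^ 2 / 2) / ε) ∂σ) ∧
    (((μ.prod σ).withDensity fun p =>
        ENNReal.ofReal (Real.exp ((φε p.1 + ψε p.2 - ‖p.1 - p.2‖ ^ 2 / 2) / ε))).map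
          Prod.snd = σ ∧
     ((μ.prod σ).withDensity fun p =>
        ENNReal.ofReal (Real.exp ((φε p.1 + ψε p.2 - ‖p.1 - p.2‖ ^ 2 / 2) / ε))).map
          Prod.fst = μ.withDensity fun x => ENNReal.ofReal (-(f ^ 2 / g) * φε x)) := by
  obtain ⟨K, hK, hσK⟩ := hσ
  -- `μ` is `volume[|Ω]`, a finite measure even when `volume Ω = 0`.
  have : IsFiniteMeasure μ :=
    hμ ▸ (inferInstance : IsFiniteMeasure (ProbabilityTheory.cond volume Ω))
  have hΩ : ∀ᵐ x ∂μ, x ∈ Ω :=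
    hμ ▸ Measure.smul_absolutelyContinuous.ae_le (ae_restrict_mem hΩcpt.measurableSet)
  have hS : ∀ᵐ y ∂σ, y ∈ msupport σ := msupport_eq_support σ ▸ Measure.support_mem_ae
  have hScpt : IsCompact (msupport σ) := msupport_eq_support σ ▸ hK.of_isClosed_subset
    Measure.isClosed_support (Measure.support_subset_of_isClosed hK.isClosed hσK)
  obtain ⟨A, hA⟩ := hΩcpt.exists_bound_of_continuousOn hadm.1
  obtain ⟨B, hB⟩ := hScpt.exists_bound_of_continuousOn hadm.2
  have hφ : AEStronglyMeasurable φε μ := Measure.restrict_eq_self_of_ae_mem hΩ ▸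
    hadm.1.aestronglyMeasurable hΩcpt.measurableSet
  have hψ : AEStronglyMeasurable ψε σ := Measure.restrict_eq_self_of_ae_mem hS ▸
    hadm.2.aestronglyMeasurable hScpt.measurableSet
  have hE := integrable_entropicDensity hε hφ hψ
    (hΩ.mono fun x hx => (le_abs_self _).trans (hA x hx))
    (hS.mono fun y hy => (le_abs_self _).trans (hB y hy))
  have hleft := ae_integral_entropicDensity_mk_eq_neg_mul hε.ne' hE
    (.of_bound hφ A (hΩ.mono hA)) fun η hη _ t => hmax _ _
      ⟨hadm.1.add (continuous_const.mul hη.continuous).continuousOn, hadm.2⟩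
  have hright := ae_integral_entropicDensity_mk_eq_one hε.ne' hE
    (.of_bound hψ B (hS.mono hB)) fun η hη _ t => hmax _ _
      ⟨hadm.1, hadm.2.add (continuous_const.mul hη.continuous).continuousOn⟩
  refine ⟨hright.mono fun y => eq_neg_mul_log_of_integral_entropicDensity_mk_eq_one hε.ne',
    (hleft.and hE.prod_right_ae).mono fun x hx =>
      neg_and_eq_of_integral_entropicDensity_mk_eq hg hx.2 hx.1,
    (map_snd_withDensity_ofReal_prod hE fun p => (exp_pos _).le).trans ?_,
    (map_fst_withDensity_ofReal_prod hE fun p => (exp_pos _).le).trans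
      (withDensity_congr_ae (hleft.mono fun x hx => by simp only [hx]))⟩
  exact (withDensity_congr_ae (g := 1) (hright.mono fun y hy => by simp [hy])).trans withDensity_one

/-- Optimality conditions for a maximizer `(φ_ε, ψ_ε)` of the entropic
dual functional `D_{σ,ε}`:
(a) for `σ`-a.e. `y`, `ψ_ε(y) = −ε·log ∫ exp((φ_ε(x) − ½‖x−y‖²)/ε) dμ(x)`;
(b) for `μ`-a.e. `x`, `φ_ε(x) < 0` and
    `−(f²/g)·φ_ε(x) = exp(φ_ε(x)/ε)·∫ exp((ψ_ε(y) − ½‖x−y‖²)/ε) dσ(y)`;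
(c) the measure `γ_ε` with density `exp((φ_ε(x)+ψ_ε(y)−½‖x−y‖²)/ε)` w.r.t. `μ⊗σ` has
    second marginal `σ` and first marginal `h_ε·μ` with `h_ε := −(f²/g)·φ_ε`. -/
theorem stmt_8
    (Ω : Set (EuclideanSpace ℝ (Fin 2)))
    (hΩcpt : IsCompact Ω) (hΩconv : Convex ℝ Ω) (hΩint : (interior Ω).Nonempty)
    (μ : Measure (EuclideanSpace ℝ (Fin 2)))
    (hμ : μ = (volume Ω)⁻¹ • volume.restrict Ω)
    (f g : ℝ) (hf : 0 < f) (hg : 0 < g)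
    (σ : Measure (EuclideanSpace ℝ (Fin 2))) [IsProbabilityMeasure σ]
    (hσ : ∃ K, IsCompact K ∧ σ Kᶜ = 0)
    (ε : ℝ) (hε : 0 < ε)
    (φε ψε : EuclideanSpace ℝ (Fin 2) → ℝ)
    (hadm : EntAdmissible Ω σ φε ψε)
    (hmax : ∀ φ ψ, EntAdmissible Ω σ φ ψ → Dse μ σ f g ε φ ψ ≤ Dse μ σ f g ε φε ψε) :
    (∀ᵐ y ∂σ, ψε y =
        -ε * Real.log (∫ x, Real.exp ((φε x - ‖x - y‖ ^ 2 / 2) / ε) ∂μ)) ∧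
    (∀ᵐ x ∂μ, φε x < 0 ∧
        -(f ^ 2 / g) * φε x =
          Real.exp (φε x / ε) * ∫ y, Real.exp ((ψε y - ‖x - y‖ ^ 2 / 2) / ε) ∂σ) ∧
    (((μ.prod σ).withDensity fun p =>
        ENNReal.ofReal (Real.exp ((φε p.1 + ψε p.2 - ‖p.1 - p.2‖ ^ 2 / 2) / ε))).map
          Prod.snd = σ ∧
     ((μ.prod σ).withDensity fun p =>
        ENNReal.ofReal (Real.exp ((φε p.1 + ψε p.2 - ‖p.1 - p.2‖ ^ 2 / 2) / ε))).map
          Prod.fst = μ.withDensity fun x => ENNReal.ofReal (-(f ^ 2 / g) * φε x)) :=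
  stmt_8_general Ω hΩcpt μ hμ f g hg σ hσ ε hε φε ψε hadm hmax
end

section
/- Let ε > 0, let μ be a finite compactly supported Borel measure on ℝᵈ which is not the zero measure, and let φ : ℝᵈ → ℝ be bounded and Borel measurable. Define ψ : ℝᵈ → ℝ by ψ(y) := −ε·log ∫ exp((φ(x) − ½‖x−y‖²)/ε) dμ(x). Then ψ is differentiable on ℝᵈ and its gradient is the barycentric map: ∇ψ(y) = y − ∫ x·exp((φ(x) + ψ(y) − ½‖x−y‖²)/ε) dμ(x) for every y ∈ ℝᵈ; equivalently, ∇ψ(y) = y − (∫ x·exp((φ(x)−½‖x−y‖²)/ε) dμ(x)) / (∫ exp((φ(x)−½‖x−y‖²)/ε) dμ(x)). -/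
/-!
Write `Z(y) = ∫ exp((φ x - ‖x - y‖² / 2) / ε) dμ(x)`, so that `ψ = -ε log Z`. Since `φ` is bounded
above and `μ` is finite with bounded support, the integrand and its `y`-gradient
`ε⁻¹ (x - y) exp(…)` are dominated by a constant uniformly for `y` in a ball, so one may
differentiate under the integral sign: `∇Z(y) = ε⁻¹ (∫ x exp(…) dμ - Z(y) y)`. The chain rule for
`-ε log` turns this into `∇ψ(y) = y - Z(y)⁻¹ ∫ x exp(…) dμ`, and `exp(ψ(y)/ε) = Z(y)⁻¹` identifies
`Z(y)⁻¹ exp(…)` with the weight `exp((φ x + ψ y - ‖x - y‖² / 2) / ε)`.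
-/

set_option autoImplicit false

open MeasureTheory Filter Topology InnerProductSpace

section GradientCalculus

variable {E : Type*} [NormedAddCommGroup E] [InnerProductSpace ℝ E] [CompleteSpace E]

theorem HasDerivAt.comp_hasGradientAt {f : E → ℝ} {f' x : E} {h : ℝ → ℝ} {h' : ℝ}
    (hh : HasDerivAt h h' (f x)) (hf : HasGradientAt f f' x) :
    HasGradientAt (h ∘ f) (h' • f') x := by
  rw [hasGradientAt_iff_hasFDerivAt] at hf ⊢
  rw [map_smul]
  exact hh.comp_hasFDerivAt x hf

theorem hasGradientAt_half_norm_sub_sq (x y : E) :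
    HasGradientAt (fun z ↦ ‖x - z‖ ^ 2 / 2) (y - x) y := by
  have h := ((hasFDerivAt_id y).const_sub x).norm_sq.mul_const (2⁻¹ : ℝ)
  simp only [id, ← div_eq_mul_inv] at h
  rw [hasGradientAt_iff_hasFDerivAt]
  refine h.congr_fderiv ?_
  ext v
  simp

theorem hasGradientAt_integral_of_dominated_of_gradient_le {α : Type*} [MeasurableSpace α]
    {μ : Measure α} {F : E → α → ℝ} {F' : E → α → E} {x₀ : E} {s : Set E} {bound : α → ℝ}
    (hs : s ∈ 𝓝 x₀) (hF_meas : ∀ᶠ x in 𝓝 x₀, AEStronglyMeasurable (F x) μ)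
    (hF_int : Integrable (F x₀) μ) (hF'_meas : AEStronglyMeasurable (F' x₀) μ)
    (h_bound : ∀ᵐ a ∂μ, ∀ x ∈ s, ‖F' x a‖ ≤ bound a) (bound_integrable : Integrable bound μ)
    (h_diff : ∀ᵐ a ∂μ, ∀ x ∈ s, HasGradientAt (F · a) (F' x a) x) :
    HasGradientAt (fun x ↦ ∫ a, F x a ∂μ) (∫ a, F' x₀ a ∂μ) x₀ := by
  have hF'_int : Integrable (F' x₀) μ :=
    bound_integrable.mono' hF'_meas (h_bound.mono fun a ha ↦ ha x₀ (mem_of_mem_nhds hs))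
  rw [hasGradientAt_iff_hasFDerivAt]
  have hdual : toDual ℝ E (∫ a, F' x₀ a ∂μ) = ∫ a, innerSL ℝ (F' x₀ a) ∂μ :=
    ((innerSL ℝ).integral_comp_comm hF'_int).symm
  rw [hdual]
  refine hasFDerivAt_integral_of_dominated_of_fderiv_le (F' := fun x a ↦ innerSL ℝ (F' x a)) hs
    hF_meas hF_int ((innerSL ℝ).continuous.comp_aestronglyMeasurable hF'_meas) ?_
    bound_integrable ?_
  · simpa only [innerSL_apply_norm] using h_bound
  · exact h_diff.mono fun a ha x hx ↦ hasGradientAt_iff_hasFDerivAt.mp (ha x hx)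

end GradientCalculus

theorem IsCompact.exists_ae_norm_le {E : Type*} [SeminormedAddCommGroup E] [MeasurableSpace E]
    {μ : Measure E} {K : Set E} (hK : IsCompact K) (hμK : μ Kᶜ = 0) :
    ∃ R, ∀ᵐ x ∂μ, ‖x‖ ≤ R := by
  obtain ⟨R, hR⟩ := hK.isBounded.exists_norm_le
  exact ⟨R, measure_mono_null (fun x hx hxK ↦ hx (hR x hxK)) hμK⟩

noncomputable section Softmin

variable {E : Type*} [NormedAddCommGroup E] {ε C R : ℝ} {φ : E → ℝ}

def gibbsWeight (ε : ℝ) (φ : E → ℝ) (y x : E) : ℝ :=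
  Real.exp ((φ x - ‖x - y‖ ^ 2 / 2) / ε)

theorem gibbsWeight_pos (ε : ℝ) (φ : E → ℝ) (y x : E) : 0 < gibbsWeight ε φ y x :=
  Real.exp_pos _

theorem gibbsWeight_le (hε : 0 < ε) (hφ : ∀ x, φ x ≤ C) (y x : E) :
    gibbsWeight ε φ y x ≤ Real.exp (C / ε) := by
  unfold gibbsWeight
  gcongr
  linarith [hφ x, sq_nonneg ‖x - y‖]

section Gradient

variable [InnerProductSpace ℝ E] [CompleteSpace E]

theorem hasGradientAt_gibbsWeight (ε : ℝ) (φ : E → ℝ) (x y : E) :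
    HasGradientAt (gibbsWeight ε φ · x) ((ε⁻¹ * gibbsWeight ε φ y x) • (x - y)) y := by
  have hexp : HasDerivAt (fun t ↦ Real.exp ((φ x - t) / ε))
      (gibbsWeight ε φ y x * (-1 / ε)) (‖x - y‖ ^ 2 / 2) :=
    (((hasDerivAt_id _).const_sub (φ x)).div_const ε).exp
  convert hexp.comp_hasGradientAt (f := fun z ↦ ‖x - z‖ ^ 2 / 2)
    (hasGradientAt_half_norm_sub_sq x y) using 1
  · rfl
  · module

end Gradient

variable [MeasurableSpace E] {μ : Measure E}

def softminPotential (μ : Measure E) (ε : ℝ) (φ : E → ℝ) (y : E) : ℝ :=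
  -ε * Real.log (∫ x, gibbsWeight ε φ y x ∂μ)

theorem integral_gibbsWeight_pos {y : E} (hμ : μ ≠ 0) (hint : Integrable (gibbsWeight ε φ y) μ) :
    0 < ∫ x, gibbsWeight ε φ y x ∂μ := by
  rw [integral_pos_iff_support_of_nonneg (fun x ↦ (gibbsWeight_pos ε φ y x).le) hint,
    Function.support_eq_univ fun x ↦ (gibbsWeight_pos ε φ y x).ne']
  exact Measure.measure_univ_pos.mpr hμ

theorem integral_exp_softminPotential_smul [InnerProductSpace ℝ E] {y : E} (hε : ε ≠ 0)
    (hZ : 0 < ∫ x, gibbsWeight ε φ y x ∂μ) :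
    ∫ x, Real.exp ((φ x + softminPotential μ ε φ y - ‖x - y‖ ^ 2 / 2) / ε) • x ∂μ
      = (∫ x, gibbsWeight ε φ y x ∂μ)⁻¹ • ∫ x, gibbsWeight ε φ y x • x ∂μ := by
  have hweight : ∀ x, Real.exp ((φ x + softminPotential μ ε φ y - ‖x - y‖ ^ 2 / 2) / ε)
      = (∫ x, gibbsWeight ε φ y x ∂μ)⁻¹ * gibbsWeight ε φ y x := by
    intro x
    rw [← Real.exp_log hZ, ← Real.exp_neg, gibbsWeight, ← Real.exp_add, softminPotential]
    congr 1
    field_simp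
    ring
  simp_rw [hweight, mul_smul]
  exact integral_smul _ _

variable [OpensMeasurableSpace E]

theorem measurable_gibbsWeight (hφ : Measurable φ) (ε : ℝ) (y : E) :
    Measurable (gibbsWeight ε φ y) :=
  ((hφ.sub (by fun_prop : Continuous fun x : E ↦ ‖x - y‖ ^ 2 / 2).measurable).div_const ε).exp

theorem integrable_gibbsWeight [IsFiniteMeasure μ] (hε : 0 < ε) (hφm : Measurable φ)
    (hφ : ∀ x, φ x ≤ C) (y : E) : Integrable (gibbsWeight ε φ y) μ := by
  refine (integrable_const (Real.exp (C / ε))).mono'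
    (measurable_gibbsWeight hφm ε y).aestronglyMeasurable (ae_of_all _ fun x ↦ ?_)
  rw [Real.norm_of_nonneg (gibbsWeight_pos ε φ y x).le]
  exact gibbsWeight_le hε hφ y x

variable [InnerProductSpace ℝ E] [SecondCountableTopology E] [IsFiniteMeasure μ]

theorem integrable_gibbsWeight_smul (hε : 0 < ε) (hφm : Measurable φ) (hφ : ∀ x, φ x ≤ C)
    (hR : ∀ᵐ x ∂μ, ‖x‖ ≤ R) (y : E) :
    Integrable (fun x ↦ gibbsWeight ε φ y x • x) μ := by
  refine (integrable_const (Real.exp (C / ε) * R)).mono'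
    ((measurable_gibbsWeight hφm ε y).aestronglyMeasurable.smul aestronglyMeasurable_id) ?_
  filter_upwards [hR] with x hx
  rw [norm_smul, Real.norm_of_nonneg (gibbsWeight_pos ε φ y x).le]
  exact mul_le_mul (gibbsWeight_le hε hφ y x) hx (norm_nonneg x) (Real.exp_pos _).le

variable [CompleteSpace E]

theorem hasGradientAt_integral_gibbsWeight (hε : 0 < ε) (hφm : Measurable φ)
    (hφ : ∀ x, φ x ≤ C) (hR : ∀ᵐ x ∂μ, ‖x‖ ≤ R) (y : E) :
    HasGradientAt (fun y ↦ ∫ x, gibbsWeight ε φ y x ∂μ)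
      (ε⁻¹ • ((∫ x, gibbsWeight ε φ y x • x ∂μ) - (∫ x, gibbsWeight ε φ y x ∂μ) • y)) y := by
  have h_meas : AEStronglyMeasurable (fun x ↦ (ε⁻¹ * gibbsWeight ε φ y x) • (x - y)) μ :=
    ((measurable_gibbsWeight hφm ε y).const_mul ε⁻¹).aestronglyMeasurable.smul
      (aestronglyMeasurable_id.sub aestronglyMeasurable_const)
  have h_bound : ∀ᵐ x ∂μ, ∀ z ∈ Metric.ball y 1,
      ‖(ε⁻¹ * gibbsWeight ε φ z x) • (x - z)‖ ≤ ε⁻¹ * Real.exp (C / ε) * (R + (‖y‖ + 1)) := by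
    filter_upwards [hR] with x hx z hz
    rw [norm_smul, Real.norm_of_nonneg (mul_pos (inv_pos.2 hε) (gibbsWeight_pos ε φ z x)).le]
    gcongr
    · exact gibbsWeight_le hε hφ z x
    · calc ‖x - z‖ ≤ ‖x‖ + ‖z‖ := norm_sub_le x z
        _ ≤ R + (‖y‖ + 1) := add_le_add hx (norm_lt_of_mem_ball hz).le
  convert hasGradientAt_integral_of_dominated_of_gradient_le (Metric.ball_mem_nhds y one_pos)
    (Eventually.of_forall fun z ↦ (measurable_gibbsWeight hφm ε z).aestronglyMeasurable)
    (integrable_gibbsWeight hε hφm hφ y) h_meas h_bound (integrable_const _)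
    (ae_of_all _ fun x z _ ↦ hasGradientAt_gibbsWeight ε φ x z) using 1
  rw [← integral_smul_const, ← integral_sub (integrable_gibbsWeight_smul hε hφm hφ hR y)
    ((integrable_gibbsWeight hε hφm hφ y).smul_const y), ← integral_smul]
  congr 1 with x
  module

theorem hasGradientAt_softminPotential (hε : 0 < ε) (hμ : μ ≠ 0) (hφm : Measurable φ)
    (hφ : ∀ x, φ x ≤ C) (hR : ∀ᵐ x ∂μ, ‖x‖ ≤ R) (y : E) :
    HasGradientAt (softminPotential μ ε φ)
      (y - (∫ x, gibbsWeight ε φ y x ∂μ)⁻¹ • ∫ x, gibbsWeight ε φ y x • x ∂μ) y := by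
  have hZ := integral_gibbsWeight_pos hμ (integrable_gibbsWeight hε hφm hφ y)
  convert ((Real.hasDerivAt_log hZ.ne').const_mul (-ε)).comp_hasGradientAt
    (f := fun y ↦ ∫ x, gibbsWeight ε φ y x ∂μ)
    (hasGradientAt_integral_gibbsWeight hε hφm hφ hR y) using 1
  · rfl
  rw [smul_smul, smul_sub, smul_smul]
  match_scalars <;> field_simp

end Softmin

/-- Let `ε > 0`, `μ` a nonzero finite compactly supported Borel measure
on ℝᵈ, and `φ : ℝᵈ → ℝ` bounded and Borel measurable.  Define the soft-min potential
`ψ(y) := −ε·log ∫ exp((φ(x) − ½‖x−y‖²)/ε) dμ(x)`.  Then `ψ` is differentiable on ℝᵈ and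
its gradient is the barycentric map:
`∇ψ(y) = y − ∫ x·exp((φ(x) + ψ(y) − ½‖x−y‖²)/ε) dμ(x)` for every `y`; equivalently,
`∇ψ(y) = y − (∫ x·exp((φ(x)−½‖x−y‖²)/ε) dμ(x)) / (∫ exp((φ(x)−½‖x−y‖²)/ε) dμ(x))`. -/
theorem stmt_9 {d : ℕ} (ε : ℝ) (hε : 0 < ε)
    (μ : Measure (EuclideanSpace ℝ (Fin d))) [IsFiniteMeasure μ]
    (hμne : μ ≠ 0) (hμcpt : ∃ K, IsCompact K ∧ μ Kᶜ = 0)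
    (φ : EuclideanSpace ℝ (Fin d) → ℝ) (hφm : Measurable φ)
    (hφb : ∃ C : ℝ, ∀ x, |φ x| ≤ C)
    (ψ : EuclideanSpace ℝ (Fin d) → ℝ)
    (hψ : ∀ y, ψ y = -ε * Real.log (∫ x, Real.exp ((φ x - ‖x - y‖ ^ 2 / 2) / ε) ∂μ)) :
    ∀ y : EuclideanSpace ℝ (Fin d),
      HasGradientAt ψ
        (y - ∫ x, Real.exp ((φ x + ψ y - ‖x - y‖ ^ 2 / 2) / ε) • x ∂μ) y ∧
      y - (∫ x, Real.exp ((φ x + ψ y - ‖x - y‖ ^ 2 / 2) / ε) • x ∂μ) =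
        y - (∫ x, Real.exp ((φ x - ‖x - y‖ ^ 2 / 2) / ε) ∂μ)⁻¹ •
              ∫ x, Real.exp ((φ x - ‖x - y‖ ^ 2 / 2) / ε) • x ∂μ := by
  obtain ⟨K, hK, hμK⟩ := hμcpt
  obtain ⟨R, hR⟩ := hK.exists_ae_norm_le hμK
  obtain ⟨C, hC⟩ := hφb
  have hφC : ∀ x, φ x ≤ C := fun x ↦ (le_abs_self _).trans (hC x)
  obtain rfl : ψ = softminPotential μ ε φ := funext hψ
  intro y
  have hZ := integral_gibbsWeight_pos hμne (integrable_gibbsWeight hε hφm hφC y)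
  rw [integral_exp_softminPotential_smul hε.ne' hZ]
  exact ⟨hasGradientAt_softminPotential hε hμne hφm hφC hR y, rfl⟩
end
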